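/- For every x⁰ = (x₂⁰, x₄⁰, x₅⁰, x₆⁰, x₇⁰, x₈⁰) ∈ ℝ⁶, the curve with coordinates x₂(t) = (x₄⁰)²(x₈⁰)²t³/6 + x₆⁰x₈⁰x₄⁰t²/2 + x₄⁰x₇⁰t + x₂⁰, x₄(t) = x₄⁰, x₅(t) = -[(x₄⁰)²(x₈⁰)³t⁴/6 + (2/3)x₄⁰x₆⁰(x₈⁰)²t³ + (x₄⁰x₇⁰x₈⁰ + ½(x₆⁰)²x₈⁰)t² + (x₂⁰x₈⁰ + x₇⁰x₆⁰)t] + x₅⁰, x₆(t) = x₄⁰x₈⁰t + x₆⁰, x₇(t) = x₄⁰(x₈⁰)²t²/2 + x₆⁰x₈⁰t + x₇⁰, x₈(t) = x₈⁰ is the solution of the system x₂' = x₇x₄, x₄' = 0, x₅' = -(x₂x₈ + x₇x₆), x₆' = x₈x₄, x₇' = x₈x₆, x₈' = 0 with initial condition x(0) = x⁰. -/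

import Mathlib

private lemma hasDerivAt_quartic (a b c d e t : ℝ) :
    HasDerivAt (fun s : ℝ => a * s ^ 4 + b * s ^ 3 + c * s ^ 2 + d * s + e)
      (4 * a * t ^ 3 + 3 * b * t ^ 2 + 2 * c * t + d) t := by
  have h4 : HasDerivAt (fun s : ℝ => s ^ 4) (4 * t ^ 3) t := by
    simpa using hasDerivAt_pow 4 t
  have h3 : HasDerivAt (fun s : ℝ => s ^ 3) (3 * t ^ 2) t := by
    simpa using hasDerivAt_pow 3 t
  have h2 : HasDerivAt (fun s : ℝ => s ^ 2) (2 * t) t := by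
    simpa using hasDerivAt_pow 2 t
  have h1 : HasDerivAt (fun s : ℝ => s) 1 t := hasDerivAt_id t
  have := ((((h4.const_mul a).add (h3.const_mul b)).add (h2.const_mul c)).add
      (h1.const_mul d)).add_const e
  rw [show 4 * a * t ^ 3 + 3 * b * t ^ 2 + 2 * c * t + d
      = a * (4 * t ^ 3) + b * (3 * t ^ 2) + c * (2 * t) + d * 1 by ring]
  exact this

private lemma quartic_form (a b c d e v t : ℝ) (f : ℝ → ℝ)
    (hf : ∀ s, f s = a * s ^ 4 + b * s ^ 3 + c * s ^ 2 + d * s + e)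
    (hv : v = 4 * a * t ^ 3 + 3 * b * t ^ 2 + 2 * c * t + d) :
    HasDerivAt f v t := by
  have h := hasDerivAt_quartic a b c d e t
  rw [hv]
  exact h.congr_of_eventuallyEq (Filter.Eventually.of_forall fun s => (hf s))

/-- The explicit curve claimed to solve the Hamiltonian system of `H₄`, in the
coordinates `(x₂, x₄, x₅, x₆, x₇, x₈)` on `ℝ⁶` (indices `0,…,5`). -/
noncomputable def sol17 (x0 : Fin 6 → ℝ) (t : ℝ) : Fin 6 → ℝ :=
  ![(x0 1) ^ 2 * (x0 5) ^ 2 * t ^ 3 / 6 + x0 3 * x0 5 * x0 1 * t ^ 2 / 2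
      + x0 1 * x0 4 * t + x0 0,
    x0 1,
    -((x0 1) ^ 2 * (x0 5) ^ 3 * t ^ 4 / 6 + (2 / 3) * x0 1 * x0 3 * (x0 5) ^ 2 * t ^ 3
      + (x0 1 * x0 4 * x0 5 + (x0 3) ^ 2 * x0 5 / 2) * t ^ 2
      + (x0 0 * x0 5 + x0 4 * x0 3) * t) + x0 2,
    x0 1 * x0 5 * t + x0 3,
    x0 1 * (x0 5) ^ 2 * t ^ 2 / 2 + x0 3 * x0 5 * t + x0 4,
    x0 5]

/-- For every initial value `x⁰ ∈ ℝ⁶`, the explicit curve `sol17 x⁰` solves the system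
`x₂' = x₇x₄`, `x₄' = 0`, `x₅' = -(x₂x₈ + x₇x₆)`, `x₆' = x₈x₄`, `x₇' = x₈x₆`, `x₈' = 0`
with initial condition `x(0) = x⁰`. -/
theorem stmt_17 : ∀ x0 : Fin 6 → ℝ,
    sol17 x0 0 = x0 ∧
    ∀ t : ℝ,
      HasDerivAt (fun s => sol17 x0 s 0) (sol17 x0 t 4 * sol17 x0 t 1) t ∧
      HasDerivAt (fun s => sol17 x0 s 1) 0 t ∧
      HasDerivAt (fun s => sol17 x0 s 2)
        (-(sol17 x0 t 0 * sol17 x0 t 5 + sol17 x0 t 4 * sol17 x0 t 3)) t ∧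
      HasDerivAt (fun s => sol17 x0 s 3) (sol17 x0 t 5 * sol17 x0 t 1) t ∧
      HasDerivAt (fun s => sol17 x0 s 4) (sol17 x0 t 5 * sol17 x0 t 3) t ∧
      HasDerivAt (fun s => sol17 x0 s 5) 0 t := by
  intro x0
  refine ⟨?_, ?_⟩
  · funext i
    fin_cases i
    · show (x0 1) ^ 2 * (x0 5) ^ 2 * (0:ℝ) ^ 3 / 6 + x0 3 * x0 5 * x0 1 * (0:ℝ) ^ 2 / 2
        + x0 1 * x0 4 * 0 + x0 0 = x0 0
      ring
    · rfl
    · show -((x0 1) ^ 2 * (x0 5) ^ 3 * (0:ℝ) ^ 4 / 6 + (2 / 3) * x0 1 * x0 3 * (x0 5) ^ 2 * (0:ℝ) ^ 3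
        + (x0 1 * x0 4 * x0 5 + (x0 3) ^ 2 * x0 5 / 2) * (0:ℝ) ^ 2
        + (x0 0 * x0 5 + x0 4 * x0 3) * 0) + x0 2 = x0 2
      ring
    · show x0 1 * x0 5 * (0:ℝ) + x0 3 = x0 3; ring
    · show x0 1 * (x0 5) ^ 2 * (0:ℝ) ^ 2 / 2 + x0 3 * x0 5 * 0 + x0 4 = x0 4; ring
    · rfl
  · intro t
    refine ⟨?_, ?_, ?_, ?_, ?_, ?_⟩
    · show HasDerivAt
        (fun s : ℝ => (x0 1) ^ 2 * (x0 5) ^ 2 * s ^ 3 / 6 + x0 3 * x0 5 * x0 1 * s ^ 2 / 2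
          + x0 1 * x0 4 * s + x0 0)
        ((x0 1 * (x0 5) ^ 2 * t ^ 2 / 2 + x0 3 * x0 5 * t + x0 4) * x0 1) t
      exact quartic_form 0 ((x0 1) ^ 2 * (x0 5) ^ 2 / 6) (x0 3 * x0 5 * x0 1 / 2)
        (x0 1 * x0 4) (x0 0) _ t _ (fun s => by ring) (by ring)
    · show HasDerivAt (fun _ : ℝ => x0 1) 0 t
      exact hasDerivAt_const t (x0 1)
    · show HasDerivAt
        (fun s : ℝ => -((x0 1) ^ 2 * (x0 5) ^ 3 * s ^ 4 / 6 + (2 / 3) * x0 1 * x0 3 * (x0 5) ^ 2 * s ^ 3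
          + (x0 1 * x0 4 * x0 5 + (x0 3) ^ 2 * x0 5 / 2) * s ^ 2
          + (x0 0 * x0 5 + x0 4 * x0 3) * s) + x0 2)
        (-(((x0 1) ^ 2 * (x0 5) ^ 2 * t ^ 3 / 6 + x0 3 * x0 5 * x0 1 * t ^ 2 / 2
            + x0 1 * x0 4 * t + x0 0) * x0 5
          + (x0 1 * (x0 5) ^ 2 * t ^ 2 / 2 + x0 3 * x0 5 * t + x0 4) * (x0 1 * x0 5 * t + x0 3))) t
      exact quartic_form (-((x0 1) ^ 2 * (x0 5) ^ 3 / 6)) (-((2 / 3) * x0 1 * x0 3 * (x0 5) ^ 2))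
        (-(x0 1 * x0 4 * x0 5 + (x0 3) ^ 2 * x0 5 / 2)) (-(x0 0 * x0 5 + x0 4 * x0 3)) (x0 2)
        _ t _ (fun s => by ring) (by ring)
    · show HasDerivAt (fun s : ℝ => x0 1 * x0 5 * s + x0 3) (x0 5 * x0 1) t
      exact quartic_form 0 0 0 (x0 1 * x0 5) (x0 3) _ t _ (fun s => by ring) (by ring)
    · show HasDerivAt (fun s : ℝ => x0 1 * (x0 5) ^ 2 * s ^ 2 / 2 + x0 3 * x0 5 * s + x0 4)
        (x0 5 * (x0 1 * x0 5 * t + x0 3)) t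
      exact quartic_form 0 0 (x0 1 * (x0 5) ^ 2 / 2) (x0 3 * x0 5) (x0 4) _ t _
        (fun s => by ring) (by ring)
    · show HasDerivAt (fun _ : ℝ => x0 5) 0 t
      exact hasDerivAt_const t (x0 5)
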